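/- arXiv:1909.12498 — 3 statements merged into one kernel-verified Lean document; each statement's English description precedes it below -/
import Mathlib

section
/- The maximum over unit vectors η ∈ ℝ^d of 2μ ∫₀ᵗ |⟨η, ξ(s)⟩| ds equals 2μ (∑_{j=1}^d (t^j/j!)²)^{1/2}, for any μ > 0 and t > 0. -/
/-!
Write `v = (∫₀ᵗ ξᵢ)ᵢ`. Since every `ξᵢ` is nonnegative on `[0, t]`,
`|⟪η, ξ(s)⟫| ≤ ⟪|η|, ξ(s)⟫`, so integrating and applying Cauchy–Schwarz bounds
`∫₀ᵗ |⟪η, ξ⟫|` by `‖η‖ ‖v‖`. Conversely `∫₀ᵗ |⟪η, ξ⟫| ≥ |⟪η, v⟫|`, which equals `‖v‖`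
for `η = v / ‖v‖`. Finally `vᵢ = t^(d-i+1) / (d-i+1)!`, so `‖v‖² = ∑ⱼ (tʲ/j!)²`.
-/

open Real InnerProductSpace Nat MeasureTheory

lemma exists_norm_eq_one_inner_eq_norm {E : Type*} [NormedAddCommGroup E] [InnerProductSpace ℝ E]
    [Nontrivial E] (v : E) : ∃ η : E, ‖η‖ = 1 ∧ ⟪η, v⟫_ℝ = ‖v‖ := by
  rcases eq_or_ne v 0 with rfl | hv
  · simpa using exists_norm_eq E zero_le_one
  · refine ⟨‖v‖⁻¹ • v, norm_smul_inv_norm hv, ?_⟩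
    rw [real_inner_smul_left, real_inner_self_eq_norm_sq]
    field_simp

noncomputable def intervalIntegralVec {ι : Type*} (f : ι → ℝ → ℝ) (a b : ℝ) :
    EuclideanSpace ℝ ι :=
  WithLp.toLp 2 fun i => ∫ s in a..b, f i s

section

variable {ι : Type*} [Fintype ι] {f : ι → ℝ → ℝ} {a b : ℝ}

lemma integral_sum_mul (hf : ∀ i, IntervalIntegrable (f i) volume a b)
    (c : ι → ℝ) : ∫ s in a..b, ∑ i, c i * f i s = ∑ i, c i * ∫ s in a..b, f i s := by
  rw [intervalIntegral.integral_finsetSum fun i _ => (hf i).const_mul (c i)]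
  simp only [intervalIntegral.integral_const_mul]

lemma inner_intervalIntegralVec (hf : ∀ i, IntervalIntegrable (f i) volume a b)
    (η : EuclideanSpace ℝ ι) :
    ⟪η, intervalIntegralVec f a b⟫_ℝ = ∫ s in a..b, ∑ i, η i * f i s := by
  rw [integral_sum_mul hf]
  simp [intervalIntegralVec, PiLp.inner_apply, mul_comm]

lemma abs_inner_intervalIntegralVec_le (hab : a ≤ b)
    (hf : ∀ i, IntervalIntegrable (f i) volume a b) (η : EuclideanSpace ℝ ι) :
    |⟪η, intervalIntegralVec f a b⟫_ℝ| ≤ ∫ s in a..b, |∑ i, η i * f i s| := by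
  rw [inner_intervalIntegralVec hf]
  exact intervalIntegral.abs_integral_le_integral_abs hab

lemma integral_abs_sum_mul_le (hab : a ≤ b)
    (hf : ∀ i, IntervalIntegrable (f i) volume a b)
    (hf₀ : ∀ i, ∀ s ∈ Set.Icc a b, 0 ≤ f i s) (η : EuclideanSpace ℝ ι) :
    ∫ s in a..b, |∑ i, η i * f i s| ≤ ‖η‖ * ‖intervalIntegralVec f a b‖ := by
  have hint (c : ι → ℝ) : IntervalIntegrable (fun s => ∑ i, c i * f i s) volume a b := by
    simpa only [Finset.sum_fn] using
      IntervalIntegrable.sum Finset.univ fun i _ => (hf i).const_mul (c i)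
  calc ∫ s in a..b, |∑ i, η i * f i s|
      ≤ ∫ s in a..b, ∑ i, |η i| * f i s := by
        refine intervalIntegral.integral_mono_on hab (hint η).abs (hint _) fun s hs => ?_
        refine (Finset.abs_sum_le_sum_abs _ _).trans_eq (Finset.sum_congr rfl fun i _ => ?_)
        rw [abs_mul, abs_of_nonneg (hf₀ i s hs)]
    _ = ∑ i, |η i| * |intervalIntegralVec f a b i| := by
        rw [integral_sum_mul hf]
        refine Finset.sum_congr rfl fun i _ => ?_
        rw [intervalIntegralVec, PiLp.toLp_apply,
          abs_of_nonneg (intervalIntegral.integral_nonneg hab (hf₀ i))]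
    _ ≤ ‖η‖ * ‖intervalIntegralVec f a b‖ := by
        simpa only [EuclideanSpace.norm_eq, Real.norm_eq_abs, sq_abs] using
          Real.sum_mul_le_sqrt_mul_sqrt Finset.univ (fun i => |η i|)
            (fun i => |intervalIntegralVec f a b i|)

theorem isGreatest_integral_abs_sum_mul [Nonempty ι] (hab : a ≤ b)
    (hf : ∀ i, IntervalIntegrable (f i) volume a b)
    (hf₀ : ∀ i, ∀ s ∈ Set.Icc a b, 0 ≤ f i s) :
    IsGreatest {x | ∃ η : EuclideanSpace ℝ ι, ‖η‖ = 1 ∧ x = ∫ s in a..b, |∑ i, η i * f i s|}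
      ‖intervalIntegralVec f a b‖ := by
  refine ⟨?_, ?_⟩
  · obtain ⟨η, hη, hηv⟩ := exists_norm_eq_one_inner_eq_norm (intervalIntegralVec f a b)
    refine ⟨η, hη, le_antisymm ?_ ?_⟩
    · simpa [hηv] using abs_inner_intervalIntegralVec_le hab hf η
    · simpa [hη] using integral_abs_sum_mul_le hab hf hf₀ η
  · rintro x ⟨η, hη, rfl⟩
    simpa [hη] using integral_abs_sum_mul_le hab hf hf₀ η

end

lemma integral_pow_div_factorial (k : ℕ) (t : ℝ) :
    ∫ s in (0 : ℝ)..t, s ^ k / k ! = t ^ (k + 1) / (k + 1)! := by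
  rw [intervalIntegral.integral_div, integral_pow, Nat.factorial_succ]
  push_cast
  field_simp
  ring

lemma sum_fin_rev_eq_sum_Icc {M : Type*} [AddCommMonoid M] (d : ℕ) (g : ℕ → M) :
    ∑ i : Fin d, g (d - 1 - i + 1) = ∑ j ∈ Finset.Icc 1 d, g j := by
  rw [Fin.sum_univ_eq_sum_range (fun i => g (d - 1 - i + 1)),
    Finset.sum_range_reflect (fun j => g (j + 1)), Finset.range_eq_Ico, Finset.sum_Ico_add' g,
    zero_add, Finset.Ico_add_one_right_eq_Icc]

lemma norm_intervalIntegralVec_pow_div_factorial (d : ℕ) (t : ℝ) :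
    ‖intervalIntegralVec (fun (i : Fin d) s => s ^ (d - 1 - (i : ℕ)) / (d - 1 - (i : ℕ))!) 0 t‖
      = √(∑ j ∈ Finset.Icc 1 d, (t ^ j / j !) ^ 2) := by
  simp only [EuclideanSpace.norm_eq, intervalIntegralVec,
    integral_pow_div_factorial, Real.norm_eq_abs, sq_abs]
  rw [sum_fin_rev_eq_sum_Icc d fun j => (t ^ j / j !) ^ 2]

theorem integrator_reach_set_diameter (d : ℕ) (hd : 1 ≤ d) (μ t : ℝ) (hμ : 0 < μ) (ht : 0 < t) :
    IsGreatest
      {x : ℝ | ∃ η : EuclideanSpace ℝ (Fin d), ‖η‖ = 1 ∧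
        x = 2 * μ * ∫ s in (0:ℝ)..t,
          |∑ i : Fin d, η i * (s ^ (d - 1 - (i : ℕ)) / Nat.factorial (d - 1 - (i : ℕ)))|}
      (2 * μ * Real.sqrt (∑ j ∈ Finset.Icc 1 d, (t ^ j / Nat.factorial j) ^ 2)) := by
  have : Nonempty (Fin d) := ⟨⟨0, hd⟩⟩
  have hmax := isGreatest_integral_abs_sum_mul
    (f := fun (i : Fin d) s => s ^ (d - 1 - (i : ℕ)) / (d - 1 - (i : ℕ))!) ht.le
    (fun i => ((continuous_pow _).div_const _).intervalIntegrable 0 t)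
    (fun i s hs => by have := hs.1; positivity)
  rw [norm_intervalIntegralVec_pow_div_factorial] at hmax
  have hscale : Monotone fun x : ℝ => 2 * μ * x := fun _ _ h => by dsimp only; gcongr
  refine (congrArg (IsGreatest · _) ?_).mpr (hscale.map_isGreatest hmax)
  refine Set.ext fun x => ⟨?_, ?_⟩
  · rintro ⟨η, hη, rfl⟩
    exact ⟨_, ⟨η, hη, rfl⟩, rfl⟩
  · rintro ⟨_, ⟨η, hη, rfl⟩, rfl⟩
    exact ⟨η, hη, rfl⟩
end

section
/- For the double integrator (d = 2), the diameter of the reach set at time t > 0 from a singleton initial condition with control bound μ > 0, given by max_{‖η‖₂=1} 2μ ∫₀ᵗ |η₁ s + η₂| ds, equals μ t √(t² + 4). -/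
/-!
The integrand `s ↦ |η₀ s + η₁|` is convex, so its integral over `[0, t]` is at most the
trapezoid `t / 2 * (|η₁| + |η₀ t + η₁|)`, and for a unit vector `η` this is at most
`t / 2 * √(t² + 4)` by Cauchy–Schwarz. Both bounds are equalities at `η = (t, 2) / √(t² + 4)`,
where the integrand is affine and nonnegative.
-/

open Real Set MeasureTheory

theorem ConvexOn.add_apply_reflect_le {f : ℝ → ℝ} {a b x : ℝ} (hf : ConvexOn ℝ (Icc a b) f)
    (hx : x ∈ Icc a b) : f x + f (a + b - x) ≤ f a + f b := by
  obtain ⟨hax, hxb⟩ := hx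
  rcases (hax.trans hxb).eq_or_lt with rfl | hab
  · obtain rfl : x = a := le_antisymm hxb hax
    simp
  -- `x` and `a + b - x` are the convex combinations of `a` and `b` with swapped weights.
  set θ := (x - a) / (b - a) with hθ
  have hba : b - a ≠ 0 := by linarith
  have hθ₀ : 0 ≤ θ := div_nonneg (by linarith) (by linarith)
  have hθ₁ : 0 ≤ 1 - θ := by rw [hθ, one_sub_div hba]; exact div_nonneg (by linarith) (by linarith)
  have hcomb : (1 - θ) • a + θ • b = x := by simp only [hθ, smul_eq_mul]; field_simp; ring
  have hcomb' : θ • a + (1 - θ) • b = a + b - x := by simp only [hθ, smul_eq_mul]; field_simp; ring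
  have ha := left_mem_Icc.2 hab.le
  have hb := right_mem_Icc.2 hab.le
  have h₁ := hf.2 ha hb hθ₁ hθ₀ (sub_add_cancel 1 θ)
  have h₂ := hf.2 ha hb hθ₀ hθ₁ (add_sub_cancel θ 1)
  rw [hcomb] at h₁
  rw [hcomb'] at h₂
  simp only [smul_eq_mul] at h₁ h₂
  linarith

theorem ConvexOn.intervalIntegral_le_trapezoid {f : ℝ → ℝ} {a b : ℝ} (hab : a ≤ b)
    (hf : ConvexOn ℝ (Icc a b) f) (hfi : IntervalIntegrable f volume a b) :
    ∫ x in a..b, f x ≤ (b - a) / 2 * (f a + f b) := by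
  have hreflect : ∫ x in a..b, f (a + b - x) = ∫ x in a..b, f x := by
    rw [intervalIntegral.integral_comp_sub_left, add_sub_cancel_right, add_sub_cancel_left]
  have hfi' : IntervalIntegrable (fun x ↦ f (a + b - x)) volume a b := by
    simpa using (hfi.comp_sub_left (a + b)).symm
  have h := intervalIntegral.integral_mono_on hab (hfi.add hfi') intervalIntegrable_const
    fun x hx ↦ hf.add_apply_reflect_le hx
  rw [intervalIntegral.integral_add hfi hfi', hreflect, intervalIntegral.integral_const,
    smul_eq_mul] at h
  linarith

theorem convexOn_abs_mul_add (a b : ℝ) : ConvexOn ℝ univ fun s ↦ |a * s + b| := by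
  refine ⟨convex_univ, fun x _ y _ p q hp hq hpq ↦ ?_⟩
  calc |a * (p • x + q • y) + b| = |p * (a * x + b) + q * (a * y + b)| := by
        simp only [smul_eq_mul]; congr 1; linear_combination -b * hpq
    _ ≤ |p * (a * x + b)| + |q * (a * y + b)| := abs_add_le _ _
    _ = p • |a * x + b| + q • |a * y + b| := by
        rw [abs_mul, abs_mul, abs_of_nonneg hp, abs_of_nonneg hq, smul_eq_mul, smul_eq_mul]

theorem abs_add_abs_mul_add_le_sqrt {a b : ℝ} (h : a ^ 2 + b ^ 2 = 1) (t : ℝ) :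
    |b| + |a * t + b| ≤ √(t ^ 2 + 4) := by
  -- The sum is `|a * t + 2 * b|` or `|a * t|`; bound both by Cauchy–Schwarz.
  rw [Real.le_sqrt (by positivity) (by positivity)]
  rcases abs_cases (b * (a * t + b)) with ⟨he, _⟩ | ⟨he, _⟩ <;>
    nlinarith [abs_mul b (a * t + b), sq_abs b, sq_abs (a * t + b), sq_nonneg (t * b - 2 * a),
      sq_nonneg (t * b + 2 * a)]

theorem integral_abs_mul_add_of_nonneg {a b t : ℝ} (ha : 0 ≤ a) (hb : 0 ≤ b) (ht : 0 ≤ t) :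
    ∫ s in (0 : ℝ)..t, |a * s + b| = a * t ^ 2 / 2 + b * t := by
  rw [intervalIntegral.integral_congr fun s hs ↦ abs_of_nonneg (by
      rw [uIcc_of_le ht] at hs; have := hs.1; positivity),
    intervalIntegral.integral_add (intervalIntegral.intervalIntegrable_id.const_mul a)
      intervalIntegrable_const,
    intervalIntegral.integral_const_mul, integral_id, intervalIntegral.integral_const, smul_eq_mul]
  ring

theorem EuclideanSpace.norm_fin_two_eq_one_iff (η : EuclideanSpace ℝ (Fin 2)) :
    ‖η‖ = 1 ↔ η 0 ^ 2 + η 1 ^ 2 = 1 := by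
  simp [EuclideanSpace.norm_eq, Fin.sum_univ_two, Real.sqrt_eq_one]

theorem double_integrator_diameter (μ t : ℝ) (hμ : 0 < μ) (ht : 0 < t) :
    IsGreatest
      {x : ℝ | ∃ η : EuclideanSpace ℝ (Fin 2), ‖η‖ = 1 ∧
        x = 2 * μ * ∫ s in (0:ℝ)..t, |η 0 * s + η 1|}
      (μ * t * Real.sqrt (t ^ 2 + 4)) := by
  set r := √(t ^ 2 + 4)
  have hr : 0 < r := by positivity
  have hr2 : r ^ 2 = t ^ 2 + 4 := Real.sq_sqrt (by positivity)
  constructor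
  · refine ⟨!₂[t / r, 2 / r], ?_, ?_⟩ <;>
      simp only [EuclideanSpace.norm_fin_two_eq_one_iff, Matrix.cons_val_zero, Matrix.cons_val_one]
    · field_simp
      linarith
    · rw [integral_abs_mul_add_of_nonneg (by positivity) (by positivity) ht.le]
      field_simp
      rw [hr2]
      ring
  · rintro x ⟨η, hη, rfl⟩
    have hconvex :=
      (convexOn_abs_mul_add (η 0) (η 1)).subset (subset_univ (Icc 0 t)) (convex_Icc 0 t)
    have hint : IntervalIntegrable (fun s ↦ |η 0 * s + η 1|) volume 0 t :=
      (by fun_prop : Continuous fun s ↦ |η 0 * s + η 1|).intervalIntegrable 0 t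
    calc 2 * μ * ∫ s in (0:ℝ)..t, |η 0 * s + η 1|
        ≤ 2 * μ * (t / 2 * (|η 1| + |η 0 * t + η 1|)) := by
          gcongr
          simpa using hconvex.intervalIntegral_le_trapezoid ht.le hint
      _ ≤ 2 * μ * (t / 2 * r) := by
          gcongr
          exact abs_add_abs_mul_add_le_sqrt (η.norm_fin_two_eq_one_iff.1 hη) t
      _ = μ * t * r := by ring
end

section
/- For the double integrator (d = 2) with μ, t > 0, the width of the reach set from a point in direction (cos θ, sin θ), given by w(θ) = 2μ ∫₀ᵗ |s cos θ + sin θ| ds, is a continuous function of θ that attains its maximum μ t √(t² + 4) exactly at θ = arctan(2/t) and θ = π + arctan(2/t) in [0, 2π). -/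
/-!
For unit `(c, b)` the integrand `g s = s * c + b` is affine, so convexity of `|g|` gives the
trapezoid bound `∫₀ᵗ |g| ≤ t (|g 0| + |g t|) / 2 = t · max |t c + 2 b| |t c| / 2`, with equality
when `g 0` and `g t` have the same sign. Lagrange's identity
`(t c + 2 b)² + (2 c - b t)² = (t² + 4)(c² + b²)` bounds the first term by `√(t² + 4)`, with
equality iff `2 c = b t`, while `|t c| ≤ t < √(t² + 4)`. Along `2 c = b t` the integrand keeps its
sign, so the maximum is attained exactly there; in `[0, 2π)` the solutions of
`2 cos θ = t sin θ` are `arctan (2 / t)` and `π + arctan (2 / t)`.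
-/

open Real Set

lemma abs_add_abs_eq_max (x y : ℝ) : |x| + |y| = max |x + y| |x - y| := by
  rcases le_total 0 x with hx | hx <;> rcases le_total 0 y with hy | hy <;>
    simp only [abs_of_nonneg, abs_of_nonpos, hx, hy] <;> grind

lemma abs_add_abs_mul_add_eq_max (t c b : ℝ) :
    |b| + |t * c + b| = max |t * c + 2 * b| |t * c| := by
  rw [add_comm, abs_add_abs_eq_max]
  ring_nf

lemma abs_add_of_mul_nonneg {x y : ℝ} (h : 0 ≤ x * y) : |x + y| = |x| + |y| :=
  (abs_add_eq_add_abs_iff x y).2 (mul_nonneg_iff.1 h)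

lemma integral_sub_mul_add_mul (t x y : ℝ) :
    ∫ s in (0:ℝ)..t, ((t - s) * x + s * y) = t ^ 2 * (x + y) / 2 := by
  rw [intervalIntegral.integral_add
      ((by fun_prop : Continuous fun s => (t - s) * x).intervalIntegrable _ _)
      ((by fun_prop : Continuous fun s => s * y).intervalIntegrable _ _),
    intervalIntegral.integral_mul_const, intervalIntegral.integral_mul_const,
    intervalIntegral.integral_comp_sub_left fun s => s, integral_id, integral_id]
  ring

section AbsAffine

variable {t c b s : ℝ}

lemma mul_abs_mul_add_eq_abs_interp (hs : s ∈ Icc 0 t) :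
    t * |s * c + b| = |(t - s) * b + s * (t * c + b)| := by
  rw [← abs_of_nonneg (hs.1.trans hs.2), ← abs_mul, abs_of_nonneg (hs.1.trans hs.2)]
  congr 1
  ring

lemma abs_interp_split (hs : s ∈ Icc 0 t) :
    |(t - s) * b| + |s * (t * c + b)| = (t - s) * |b| + s * |t * c + b| := by
  rw [abs_mul, abs_mul, abs_of_nonneg (sub_nonneg.2 hs.2), abs_of_nonneg hs.1]

lemma mul_abs_mul_add_le (hs : s ∈ Icc 0 t) :
    t * |s * c + b| ≤ (t - s) * |b| + s * |t * c + b| := by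
  rw [mul_abs_mul_add_eq_abs_interp hs, ← abs_interp_split hs]
  exact abs_add_le _ _

lemma mul_abs_mul_add_eq (hs : s ∈ Icc 0 t) (hsign : 0 ≤ b * (t * c + b)) :
    t * |s * c + b| = (t - s) * |b| + s * |t * c + b| := by
  rw [mul_abs_mul_add_eq_abs_interp hs, ← abs_interp_split hs, abs_add_of_mul_nonneg]
  linarith [mul_nonneg (mul_nonneg (sub_nonneg.2 hs.2) hs.1) hsign]

lemma integral_abs_mul_add_le (ht : 0 < t) :
    ∫ s in (0:ℝ)..t, |s * c + b| ≤ t * (|b| + |t * c + b|) / 2 := by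
  have hmono : ∫ s in (0:ℝ)..t, t * |s * c + b|
      ≤ ∫ s in (0:ℝ)..t, ((t - s) * |b| + s * |t * c + b|) :=
    intervalIntegral.integral_mono_on ht.le
      ((by fun_prop : Continuous fun s => t * |s * c + b|).intervalIntegrable _ _)
      ((by fun_prop : Continuous fun s => (t - s) * |b| + s * |t * c + b|).intervalIntegrable _ _)
      fun s hs => mul_abs_mul_add_le hs
  rw [intervalIntegral.integral_const_mul, integral_sub_mul_add_mul] at hmono
  refine le_of_mul_le_mul_left ?_ ht
  linarith

lemma integral_abs_mul_add_eq (ht : 0 < t) (hsign : 0 ≤ b * (t * c + b)) :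
    ∫ s in (0:ℝ)..t, |s * c + b| = t * (|b| + |t * c + b|) / 2 := by
  have hcongr : ∫ s in (0:ℝ)..t, t * |s * c + b|
      = ∫ s in (0:ℝ)..t, ((t - s) * |b| + s * |t * c + b|) :=
    intervalIntegral.integral_congr fun s hs =>
      mul_abs_mul_add_eq (by rwa [uIcc_of_le ht.le] at hs) hsign
  rw [intervalIntegral.integral_const_mul, integral_sub_mul_add_mul] at hcongr
  refine mul_left_cancel₀ ht.ne' ?_
  linarith

end AbsAffine

section UnitVector

variable {t c b : ℝ}

lemma abs_mul_add_two_mul_le_sqrt (hcb : c ^ 2 + b ^ 2 = 1) :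
    |t * c + 2 * b| ≤ √(t ^ 2 + 4) :=
  abs_le_sqrt (by nlinarith [sq_nonneg (2 * c - b * t)])

lemma abs_mul_add_two_mul_eq_sqrt_iff (hcb : c ^ 2 + b ^ 2 = 1) :
    |t * c + 2 * b| = √(t ^ 2 + 4) ↔ 2 * c = b * t := by
  rw [← sqrt_sq_eq_abs, sqrt_inj (sq_nonneg _) (by positivity), ← sub_eq_zero (a := 2 * c),
    ← pow_eq_zero_iff two_ne_zero]
  constructor <;> intro h <;> linear_combination (t ^ 2 + 4) * hcb - h

lemma abs_mul_lt_sqrt (hcb : c ^ 2 + b ^ 2 = 1) : |t * c| < √(t ^ 2 + 4) := by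
  rw [lt_sqrt (abs_nonneg _), sq_abs]
  nlinarith [sq_nonneg b, sq_nonneg t, sq_nonneg (t * b)]

theorem integral_abs_mul_add_le_sqrt (ht : 0 < t) (hcb : c ^ 2 + b ^ 2 = 1) :
    ∫ s in (0:ℝ)..t, |s * c + b| ≤ t * √(t ^ 2 + 4) / 2 :=
  calc ∫ s in (0:ℝ)..t, |s * c + b| ≤ t * max |t * c + 2 * b| |t * c| / 2 := by
        rw [← abs_add_abs_mul_add_eq_max]
        exact integral_abs_mul_add_le ht
    _ ≤ t * √(t ^ 2 + 4) / 2 := by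
        gcongr
        exact max_le (abs_mul_add_two_mul_le_sqrt hcb) (abs_mul_lt_sqrt hcb).le

theorem integral_abs_mul_add_eq_sqrt_iff (ht : 0 < t) (hcb : c ^ 2 + b ^ 2 = 1) :
    ∫ s in (0:ℝ)..t, |s * c + b| = t * √(t ^ 2 + 4) / 2 ↔ 2 * c = b * t := by
  constructor
  · intro h
    have hmax : √(t ^ 2 + 4) ≤ max |t * c + 2 * b| |t * c| := by
      have := integral_abs_mul_add_le (c := c) (b := b) ht
      rw [h, abs_add_abs_mul_add_eq_max] at this
      exact le_of_mul_le_mul_left (by linarith) ht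
    have hge := (le_max_iff.1 hmax).resolve_right (abs_mul_lt_sqrt hcb).not_ge
    exact (abs_mul_add_two_mul_eq_sqrt_iff hcb).1 (le_antisymm (abs_mul_add_two_mul_le_sqrt hcb) hge)
  · intro h
    have hsign : 0 ≤ b * (t * c + b) := by
      rw [show b * (t * c + b) = b ^ 2 * (t ^ 2 + 2) / 2 by linear_combination (b * t / 2) * h]
      positivity
    rw [integral_abs_mul_add_eq ht hsign, ← abs_add_of_mul_nonneg hsign,
      show b + (t * c + b) = t * c + 2 * b by ring, (abs_mul_add_two_mul_eq_sqrt_iff hcb).2 h]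

end UnitVector

lemma sin_sub_arctan_eq_zero_iff (θ x : ℝ) : sin (θ - arctan x) = 0 ↔ sin θ = x * cos θ := by
  have : 0 < √(1 + x ^ 2) := by positivity
  rw [sin_sub, sin_arctan, cos_arctan]
  field_simp
  constructor <;> intro h <;> linarith

lemma sin_sub_eq_zero_iff_of_mem_Ico {θ α : ℝ} (hθ : θ ∈ Ico 0 (2 * π)) (hα : α ∈ Ico 0 π) :
    sin (θ - α) = 0 ↔ θ = α ∨ θ = π + α := by
  constructor
  · intro h
    obtain ⟨n, hn⟩ := sin_eq_zero_iff.1 h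
    have hlo : -1 < n := by
      have : (-1 : ℝ) < n := by nlinarith [pi_pos, hθ.1, hα.2]
      exact_mod_cast this
    have hhi : n < 2 := by
      have : (n : ℝ) < 2 := by nlinarith [pi_pos, hθ.2, hα.1]
      exact_mod_cast this
    interval_cases n
    · left
      simp only [Int.cast_zero, zero_mul] at hn
      linarith
    · right
      simp only [Int.cast_one, one_mul] at hn
      linarith
  · rintro (rfl | rfl) <;> simp

theorem double_integrator_width_max (μ t : ℝ) (hμ : 0 < μ) (ht : 0 < t)
    (w : ℝ → ℝ)
    (hw : ∀ θ, w θ = 2 * μ * ∫ s in (0:ℝ)..t, |s * Real.cos θ + Real.sin θ|) :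
    Continuous w ∧
    (∀ θ, w θ ≤ μ * t * Real.sqrt (t ^ 2 + 4)) ∧
    (∀ θ ∈ Set.Ico (0:ℝ) (2 * Real.pi),
      (w θ = μ * t * Real.sqrt (t ^ 2 + 4) ↔
        θ = Real.arctan (2 / t) ∨ θ = Real.pi + Real.arctan (2 / t))) := by
  have hscale : μ * t * √(t ^ 2 + 4) = 2 * μ * (t * √(t ^ 2 + 4) / 2) := by ring
  refine ⟨by rw [funext hw]; fun_prop, fun θ => ?_, fun θ hθ => ?_⟩
  · rw [hw, hscale]
    gcongr
    exact integral_abs_mul_add_le_sqrt ht (cos_sq_add_sin_sq θ)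
  · have hα : arctan (2 / t) ∈ Ico 0 π :=
      ⟨(arctan_pos.2 (by positivity)).le, (arctan_lt_pi_div_two _).trans (by linarith [pi_pos])⟩
    rw [hw, hscale, mul_right_inj' (by positivity),
      integral_abs_mul_add_eq_sqrt_iff ht (cos_sq_add_sin_sq θ),
      ← sin_sub_eq_zero_iff_of_mem_Ico hθ hα, sin_sub_arctan_eq_zero_iff]
    field_simp
    constructor <;> intro h <;> linarith
end
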